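/- arXiv:2604.07308 — 6 statements merged into one kernel-verified Lean document; each statement's English description precedes it below -/
import Mathlib

section
/- Let M, N be positive integers and set D = M·N. Let x, y : ℤ → ℂ be D-periodic sequences, where y is the noiseless received signal produced from x by a channel spreading function h : ℤ × ℤ → ℂ with finite support, i.e., y[n] = Σ_{k',l' ∈ ℤ} h[k',l'] · x[(n−k') mod D] · exp(2πi·l'·(n−k')/D). Then for all k, l ∈ ℤ, the cross-ambiguity estimate ĥ[k,l] := A_{y,x}[k,l] equals the discrete twisted convolution of h with the self-ambiguity function of x: A_{y,x}[k,l] = Σ_{k',l' ∈ ℤ} h[k',l'] · A_{x,x}[k−k', l−l'] · exp(2πi·l'·(k−k')/D). -/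
/-- Discrete cross-ambiguity function of `D`-periodic sequences `y` and `x`:
`A_{y,x}[k,l] = (1/D) Σ_{n=0}^{D-1} y[n] conj(x[(n-k) mod D]) exp(-2πi l (n-k)/D)`. -/
noncomputable def crossAmb (D : ℕ) (y x : ℤ → ℂ) (k l : ℤ) : ℂ :=
  (D : ℂ)⁻¹ * ∑ n ∈ Finset.range D,
    y (n : ℤ) * (starRingEnd ℂ) (x (((n : ℤ) - k) % (D : ℤ))) *
      Complex.exp (-(2 * (Real.pi : ℂ) * Complex.I * (l : ℂ) * ((n : ℂ) - (k : ℂ))) / (D : ℂ))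

/-- Discrete twisted convolution with modulation period `D`:
`(a *_{σd} b)[k,l] = Σ_{k',l'} a[k',l'] b[k-k',l-l'] exp(2πi l' (k-k')/D)`. -/
noncomputable def twConv (D : ℕ) (a b : ℤ × ℤ → ℂ) (k l : ℤ) : ℂ :=
  ∑ᶠ p : ℤ × ℤ, a p * b (k - p.1, l - p.2) *
    Complex.exp (2 * (Real.pi : ℂ) * Complex.I * (p.2 : ℂ) * ((k : ℂ) - (p.1 : ℂ)) / (D : ℂ))

lemma crossAmb_mod_eval (D : ℕ) (f : ℤ → ℂ) (hf : ∀ n : ℤ, f (n + (D : ℤ)) = f n) (n : ℤ) :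
    f (n % (D : ℤ)) = f n := by
  have hp : Function.Periodic f (D : ℤ) := hf
  conv_rhs => rw [← Int.emod_add_mul_ediv n (D : ℤ), mul_comm ((D:ℤ))]
  exact (hp.int_mul (n / (D:ℤ)) (n % (D:ℤ))).symm

lemma crossAmb_sum_shift (D : ℕ) (hD : 0 < D) (f : ℤ → ℂ)
    (hf : ∀ n : ℤ, f (n + (D : ℤ)) = f n) (t : ℤ) :
    ∑ n ∈ Finset.range D, f ((n : ℤ) + t) = ∑ n ∈ Finset.range D, f (n : ℤ) := by
  have hmod := crossAmb_mod_eval D f hf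
  have hDz : (0:ℤ) < (D:ℤ) := by exact_mod_cast hD
  have hDne : (D:ℤ) ≠ 0 := by omega
  have hcancel : ∀ a b : ℤ, ((a % (D:ℤ)) + b) % (D:ℤ) = (a + b) % (D:ℤ) := by
    intro a b
    rw [Int.add_emod, Int.emod_emod_of_dvd _ dvd_rfl, ← Int.add_emod]
  refine Finset.sum_nbij' (fun n => ((((n:ℤ) + t) % (D:ℤ)).toNat))
    (fun m => ((((m:ℤ) - t) % (D:ℤ)).toNat)) ?_ ?_ ?_ ?_ ?_
  · intro a _
    simp only [Finset.mem_range]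
    have h1 := Int.emod_lt_of_pos ((a:ℤ) + t) hDz
    have h2 := Int.emod_nonneg ((a:ℤ) + t) hDne
    omega
  · intro a _
    simp only [Finset.mem_range]
    have h1 := Int.emod_lt_of_pos ((a:ℤ) - t) hDz
    have h2 := Int.emod_nonneg ((a:ℤ) - t) hDne
    omega
  · intro a ha
    simp only [Finset.mem_range] at ha
    show (((((((a:ℤ) + t) % (D:ℤ)).toNat : ℤ)) - t) % (D:ℤ)).toNat = a
    have h2 := Int.emod_nonneg ((a:ℤ) + t) hDne
    rw [Int.toNat_of_nonneg h2, sub_eq_add_neg, hcancel, show (a:ℤ)+t+-t = (a:ℤ) by ring,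
      Int.emod_eq_of_lt (by positivity) (by exact_mod_cast ha)]
    simp
  · intro a ha
    simp only [Finset.mem_range] at ha
    show (((((((a:ℤ) - t) % (D:ℤ)).toNat : ℤ)) + t) % (D:ℤ)).toNat = a
    have h2 := Int.emod_nonneg ((a:ℤ) - t) hDne
    rw [Int.toNat_of_nonneg h2, hcancel, show (a:ℤ)-t+t = (a:ℤ) by ring,
      Int.emod_eq_of_lt (by positivity) (by exact_mod_cast ha)]
    simp
  · intro a _
    have h2 := Int.emod_nonneg ((a:ℤ) + t) hDne
    show f ((a:ℤ) + t) = f (((((a:ℤ) + t) % (D:ℤ)).toNat : ℤ))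
    rw [Int.toNat_of_nonneg h2, hmod]

lemma crossAmb_core (D : ℕ) (hD : 0 < D) (x : ℤ → ℂ)
    (hxper : ∀ n : ℤ, x (n + (D:ℤ)) = x n) (k l k' l' : ℤ) :
    ∑ n ∈ Finset.range D,
      x (((n:ℤ) - k') % (D:ℤ)) * (starRingEnd ℂ) (x (((n:ℤ) - k) % (D:ℤ))) *
        (Complex.exp (2 * (Real.pi:ℂ) * Complex.I * (l':ℂ) * ((n:ℂ) - (k':ℂ)) / (D:ℂ)) *
         Complex.exp (-(2 * (Real.pi:ℂ) * Complex.I * (l:ℂ) * ((n:ℂ) - (k:ℂ))) / (D:ℂ)))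
    = (∑ m ∈ Finset.range D,
        x (m:ℤ) * (starRingEnd ℂ) (x (((m:ℤ) - (k - k')) % (D:ℤ))) *
          Complex.exp (-(2 * (Real.pi:ℂ) * Complex.I * ((l - l' : ℤ):ℂ) * ((m:ℂ) - ((k - k' : ℤ):ℂ))) / (D:ℂ))) *
      Complex.exp (2 * (Real.pi:ℂ) * Complex.I * (l':ℂ) * ((k:ℂ) - (k':ℂ)) / (D:ℂ)) := by
  have hDC : (D:ℂ) ≠ 0 := Nat.cast_ne_zero.mpr hD.ne'
  set G : ℤ → ℂ := fun n =>
    x ((n - k') % (D:ℤ)) * (starRingEnd ℂ) (x ((n - k) % (D:ℤ))) *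
      Complex.exp ((2 * (Real.pi:ℂ) * Complex.I * (l':ℂ) * ((n:ℂ) - (k':ℂ))
        - 2 * (Real.pi:ℂ) * Complex.I * (l:ℂ) * ((n:ℂ) - (k:ℂ))) / (D:ℂ)) with hG
  have hGper : ∀ n : ℤ, G (n + (D:ℤ)) = G n := by
    intro n
    simp only [hG]
    have e1 : (n + (D:ℤ) - k') % (D:ℤ) = (n - k') % (D:ℤ) := by
      rw [show n + (D:ℤ) - k' = (n - k') + (D:ℤ) * 1 by ring, Int.add_mul_emod_self_left]
    have e2 : (n + (D:ℤ) - k) % (D:ℤ) = (n - k) % (D:ℤ) := by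
      rw [show n + (D:ℤ) - k = (n - k) + (D:ℤ) * 1 by ring, Int.add_mul_emod_self_left]
    rw [e1, e2]
    congr 1
    rw [Complex.exp_eq_exp_iff_exists_int]
    refine ⟨l' - l, ?_⟩
    push_cast
    field_simp
    ring
  have step1 : ∑ n ∈ Finset.range D,
      x (((n:ℤ) - k') % (D:ℤ)) * (starRingEnd ℂ) (x (((n:ℤ) - k) % (D:ℤ))) *
        (Complex.exp (2 * (Real.pi:ℂ) * Complex.I * (l':ℂ) * ((n:ℂ) - (k':ℂ)) / (D:ℂ)) *
         Complex.exp (-(2 * (Real.pi:ℂ) * Complex.I * (l:ℂ) * ((n:ℂ) - (k:ℂ))) / (D:ℂ)))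
      = ∑ n ∈ Finset.range D, G (n:ℤ) := by
    refine Finset.sum_congr rfl fun n _ => ?_
    simp only [hG]
    congr 1
    rw [← Complex.exp_add]
    congr 1
    push_cast
    ring
  rw [step1, ← crossAmb_sum_shift D hD G hGper k']
  rw [Finset.sum_mul]
  refine Finset.sum_congr rfl fun m hm => ?_
  simp only [Finset.mem_range] at hm
  simp only [hG]
  rw [show (m:ℤ) + k' - k' = (m:ℤ) by ring,
    Int.emod_eq_of_lt (by positivity) (by exact_mod_cast hm),
    show (m:ℤ) + k' - k = (m:ℤ) - (k - k') by ring]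
  rw [mul_assoc (x (m:ℤ) * (starRingEnd ℂ) (x (((m:ℤ) - (k - k')) % (D:ℤ))))]
  congr 1
  rw [← Complex.exp_add, Complex.exp_eq_exp_iff_exists_int]
  refine ⟨0, ?_⟩
  push_cast
  field_simp
  ring

/-- The cross-ambiguity estimate of the channel equals the twisted convolution of the
channel spreading function with the self-ambiguity function of the transmit waveform. -/
theorem stmt0 (M N : ℕ) (hM : 0 < M) (hN : 0 < N) (D : ℕ) (hD : D = M * N)
    (h : ℤ × ℤ → ℂ) (hfin : (Function.support h).Finite)
    (x y : ℤ → ℂ)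
    (hxper : ∀ n : ℤ, x (n + (D : ℤ)) = x n)
    (hyper : ∀ n : ℤ, y (n + (D : ℤ)) = y n)
    (hy : ∀ n : ℤ, y n =
      ∑ᶠ p : ℤ × ℤ, h p * x ((n - p.1) % (D : ℤ)) *
        Complex.exp (2 * (Real.pi : ℂ) * Complex.I * (p.2 : ℂ) * ((n : ℂ) - (p.1 : ℂ)) / (D : ℂ))) :
    ∀ k l : ℤ, crossAmb D y x k l =
      twConv D h (fun p => crossAmb D x x p.1 p.2) k l := by
  intro k l
  classical
  have hDpos : 0 < D := hD ▸ Nat.mul_pos hM hN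
  have hDC : (D:ℂ) ≠ 0 := Nat.cast_ne_zero.mpr hDpos.ne'
  set T : Finset (ℤ × ℤ) := hfin.toFinset with hT
  have hy' : ∀ n : ℤ, y n = ∑ p ∈ T, h p * x ((n - p.1) % (D:ℤ)) *
      Complex.exp (2 * (Real.pi:ℂ) * Complex.I * (p.2:ℂ) * ((n:ℂ) - (p.1:ℂ)) / (D:ℂ)) := by
    intro n
    rw [hy n]
    apply finsum_eq_sum_of_support_subset
    intro p hp
    simp only [Function.mem_support] at hp
    simp only [hT, Set.Finite.coe_toFinset, Function.mem_support]
    intro h0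
    exact hp (by rw [h0, zero_mul, zero_mul])
  have hR : twConv D h (fun p => crossAmb D x x p.1 p.2) k l =
      ∑ p ∈ T, h p * crossAmb D x x (k - p.1) (l - p.2) *
        Complex.exp (2 * (Real.pi:ℂ) * Complex.I * (p.2:ℂ) * ((k:ℂ) - (p.1:ℂ)) / (D:ℂ)) := by
    unfold twConv
    apply finsum_eq_sum_of_support_subset
    intro p hp
    simp only [Function.mem_support] at hp
    simp only [hT, Set.Finite.coe_toFinset, Function.mem_support]
    intro h0
    exact hp (by rw [h0, zero_mul, zero_mul])
  rw [hR]
  unfold crossAmb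
  have L1 : ∑ n ∈ Finset.range D,
      y (n:ℤ) * (starRingEnd ℂ) (x (((n:ℤ) - k) % (D:ℤ))) *
        Complex.exp (-(2 * (Real.pi:ℂ) * Complex.I * (l:ℂ) * ((n:ℂ) - (k:ℂ))) / (D:ℂ))
      = ∑ p ∈ T, ∑ n ∈ Finset.range D, h p *
          (x (((n:ℤ) - p.1) % (D:ℤ)) * (starRingEnd ℂ) (x (((n:ℤ) - k) % (D:ℤ))) *
            (Complex.exp (2 * (Real.pi:ℂ) * Complex.I * (p.2:ℂ) * ((n:ℂ) - (p.1:ℂ)) / (D:ℂ)) *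
             Complex.exp (-(2 * (Real.pi:ℂ) * Complex.I * (l:ℂ) * ((n:ℂ) - (k:ℂ))) / (D:ℂ)))) := by
    rw [Finset.sum_comm]
    refine Finset.sum_congr rfl fun n _ => ?_
    rw [hy' (n:ℤ), Finset.sum_mul, Finset.sum_mul]
    refine Finset.sum_congr rfl fun p _ => ?_
    push_cast
    ring
  rw [L1, Finset.mul_sum]
  refine Finset.sum_congr rfl fun p _ => ?_
  rw [← Finset.mul_sum, crossAmb_core D hDpos x hxper k l p.1 p.2]
  ring
end

section
/- Let M, N be positive integers and set D = M·N. Let (Ω, μ) be a probability space and let s : Fin D → Ω → ℂ be random data symbols such that |s_i(ω)| = 1 for μ-almost every ω and every i, each product s_i · conj(s_j) is integrable, and E[s_i · conj(s_j)] = 0 for all i ≠ j. Let (φ_i)_{i ∈ Fin D} be an orthonormal basis of ℂ^D (with inner product ⟨u,v⟩ = Σ_{n=0}^{D−1} u[n]·conj(v[n])), and let x(ω)[n] = Σ_{i=0}^{D−1} s_i(ω) · φ_i[n] be the data-modulated waveform. Then for every k, l ∈ ℤ, the expected self-ambiguity function satisfies E[A_{x,x}[k,l]] = 1 if D divides both k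 and l, and E[A_{x,x}[k,l]] = 0 otherwise. -/
open MeasureTheory

/-- Extension of a vector in `ℂ^D` to a `D`-periodic sequence on `ℤ`
by reduction of the index modulo `D`. -/
noncomputable def perExt (D : ℕ) (v : Fin D → ℂ) (n : ℤ) : ℂ :=
  if h : (n % (D : ℤ)).toNat < D then v ⟨(n % (D : ℤ)).toNat, h⟩ else 0

lemma resFin_lt (D : ℕ) (hD0 : 0 < D) (a : ℤ) : (a % (D : ℤ)).toNat < D := by
  have hD' : (D : ℤ) ≠ 0 := by exact_mod_cast hD0.ne'
  have h1 : 0 ≤ a % (D : ℤ) := Int.emod_nonneg a hD'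
  have h2 : a % (D : ℤ) < (D : ℤ) := Int.emod_lt_of_pos a (by exact_mod_cast hD0)
  omega

noncomputable def resFin (D : ℕ) (hD0 : 0 < D) (a : ℤ) : Fin D :=
  ⟨(a % (D : ℤ)).toNat, resFin_lt D hD0 a⟩

lemma perExt_eq (D : ℕ) (hD0 : 0 < D) (v : Fin D → ℂ) (a : ℤ) :
    perExt D v a = v (resFin D hD0 a) := by
  simp [perExt, resFin, resFin_lt D hD0 a]


open Matrix in
lemma complete_of_orth {D : ℕ} (φ : Fin D → Fin D → ℂ)
    (horth : ∀ i j : Fin D,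
      ∑ n : Fin D, φ i n * (starRingEnd ℂ) (φ j n) = if i = j then 1 else 0)
    (a b : Fin D) :
    ∑ i : Fin D, φ i a * (starRingEnd ℂ) (φ i b) = if a = b then 1 else 0 := by
  let A : Matrix (Fin D) (Fin D) ℂ := Matrix.of φ
  have hA : A * Aᴴ = 1 := by
    ext i j
    simpa [A, Matrix.mul_apply, Matrix.conjTranspose_apply, Matrix.one_apply] using horth i j
  have hA2 : Aᴴ * A = 1 := mul_eq_one_comm.mp hA
  have h := congrFun (congrFun hA2 b) a
  simp only [Matrix.mul_apply, Matrix.conjTranspose_apply, Matrix.one_apply, A, Matrix.of_apply] at h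
  calc ∑ i : Fin D, φ i a * (starRingEnd ℂ) (φ i b)
      = ∑ i : Fin D, (starRingEnd ℂ) (φ i b) * φ i a := by
        exact Finset.sum_congr rfl fun i _ => mul_comm _ _
    _ = if b = a then 1 else 0 := h
    _ = if a = b then 1 else 0 := by simp [eq_comm]

lemma sum_exp_eq (D : ℕ) (hD0 : 0 < D) (l : ℤ) :
    ∑ n ∈ Finset.range D,
      Complex.exp (-(2 * (Real.pi : ℂ) * Complex.I * (l : ℂ) * (n : ℂ)) / (D : ℂ))
      = if (D : ℤ) ∣ l then (D : ℂ) else 0 := by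
  have hDC : (D : ℂ) ≠ 0 := Nat.cast_ne_zero.mpr hD0.ne'
  have h2πI : (2 * (Real.pi : ℂ) * Complex.I) ≠ 0 := by
    simp [Complex.I_ne_zero, Real.pi_ne_zero, Complex.ofReal_ne_zero]
  set z : ℂ := Complex.exp (-(2 * (Real.pi : ℂ) * Complex.I * (l : ℂ)) / (D : ℂ)) with hz
  have hzn : ∀ n : ℕ,
      Complex.exp (-(2 * (Real.pi : ℂ) * Complex.I * (l : ℂ) * (n : ℂ)) / (D : ℂ)) = z ^ n := by
    intro n
    rw [hz, ← Complex.exp_nat_mul]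
    congr 1
    ring
  simp only [hzn]
  by_cases hl : (D : ℤ) ∣ l
  · obtain ⟨u, hu⟩ := id hl
    have hz1 : z = 1 := by
      rw [hz]
      have : -(2 * (Real.pi : ℂ) * Complex.I * (l : ℂ)) / (D : ℂ)
          = ((-u : ℤ) : ℂ) * (2 * (Real.pi : ℝ) * Complex.I) := by
        have hl' : (l : ℂ) = (D : ℂ) * (u : ℂ) := by exact_mod_cast congrArg (Int.cast : ℤ → ℂ) hu
        rw [hl']
        push_cast
        field_simp
      rw [this, Complex.exp_int_mul_two_pi_mul_I]
    simp [hz1, hl]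
  · have hzD : z ^ D = 1 := by
      rw [hz, ← Complex.exp_nat_mul]
      have : (D : ℂ) * (-(2 * (Real.pi : ℂ) * Complex.I * (l : ℂ)) / (D : ℂ))
          = ((-l : ℤ) : ℂ) * (2 * (Real.pi : ℝ) * Complex.I) := by
        push_cast
        field_simp
      rw [this, Complex.exp_int_mul_two_pi_mul_I]
    have hz1 : z ≠ 1 := by
      intro h
      rw [hz, Complex.exp_eq_one_iff] at h
      obtain ⟨m, hm⟩ := h
      apply hl
      have hm' : -(2 * (Real.pi : ℂ) * Complex.I * (l : ℂ)) = (m : ℂ) * (2 * (Real.pi : ℝ) * Complex.I) * (D : ℂ) := by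
        rw [div_eq_iff hDC] at hm
        exact hm
      have hm'' : (2 * (Real.pi : ℂ) * Complex.I) * (-(l : ℂ)) = (2 * (Real.pi : ℂ) * Complex.I) * ((m : ℂ) * (D : ℂ)) := by
        push_cast at hm' ⊢
        linear_combination hm'
      have := mul_left_cancel₀ h2πI hm''
      have hZ : (-l : ℤ) = m * (D : ℤ) := by exact_mod_cast this
      exact ⟨-m, by linarith⟩
    rw [geom_sum_eq hz1, hzD]
    simp [hl]


/-- For data symbols drawn from a unit-modulus, pairwise-uncorrelated (zero-mean) source,
modulated on any orthonormal basis of `ℂ^D`, the expected self-ambiguity function of the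
transmit waveform is an ideal thumbtack: it equals `1` when `D ∣ k` and `D ∣ l`,
and `0` otherwise. -/
theorem stmt1 (M N : ℕ) (hM : 0 < M) (hN : 0 < N) (D : ℕ) (hD : D = M * N)
    {Ω : Type*} [MeasurableSpace Ω] (μ : Measure Ω) [IsProbabilityMeasure μ]
    (s : Fin D → Ω → ℂ)
    (hunit : ∀ i : Fin D, ∀ᵐ ω ∂μ, ‖s i ω‖ = 1)
    (hint : ∀ i j : Fin D, Integrable (fun ω => s i ω * (starRingEnd ℂ) (s j ω)) μ)
    (huncorr : ∀ i j : Fin D, i ≠ j → ∫ ω, s i ω * (starRingEnd ℂ) (s j ω) ∂μ = 0)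
    (φ : Fin D → (Fin D → ℂ))
    (horth : ∀ i j : Fin D,
      ∑ n : Fin D, φ i n * (starRingEnd ℂ) (φ j n) = if i = j then 1 else 0)
    (hspan : Submodule.span ℂ (Set.range φ) = ⊤)
    (x : Ω → ℤ → ℂ)
    (hx : ∀ (ω : Ω) (n : ℤ), x ω n = ∑ i : Fin D, s i ω * perExt D (φ i) n) :
    ∀ k l : ℤ, ∫ ω, crossAmb D (x ω) (x ω) k l ∂μ =
      if (D : ℤ) ∣ k ∧ (D : ℤ) ∣ l then 1 else 0 := by
  intro k l
  have hD0 : 0 < D := hD ▸ Nat.mul_pos hM hN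
  have hDC : (D : ℂ) ≠ 0 := Nat.cast_ne_zero.mpr hD0.ne'
  -- abbreviation for the exponential factor
  set c : ℕ → ℂ := fun n =>
    Complex.exp (-(2 * (Real.pi : ℂ) * Complex.I * (l : ℂ) * ((n : ℂ) - (k : ℂ))) / (D : ℂ))
    with hc
  set g : ℕ → Fin D → Fin D → ℂ := fun n i j =>
    (D : ℂ)⁻¹ * (φ i (resFin D hD0 (n : ℤ)) *
      (starRingEnd ℂ) (φ j (resFin D hD0 (((n : ℤ) - k) % (D : ℤ)))) * c n) with hg
  have key : ∀ ω, crossAmb D (x ω) (x ω) k l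
      = ∑ n ∈ Finset.range D, ∑ i : Fin D, ∑ j : Fin D,
          (s i ω * (starRingEnd ℂ) (s j ω)) * g n i j := by
    intro ω
    unfold crossAmb
    rw [Finset.mul_sum]
    refine Finset.sum_congr rfl fun n hn => ?_
    simp only [hx, perExt_eq D hD0, map_sum, map_mul]
    rw [Finset.sum_mul_sum, Finset.sum_mul, Finset.mul_sum]
    refine Finset.sum_congr rfl fun i _ => ?_
    rw [Finset.sum_mul, Finset.mul_sum]
    refine Finset.sum_congr rfl fun j _ => ?_
    simp only [hg, hc]
    ring
  have hI : ∫ ω, crossAmb D (x ω) (x ω) k l ∂μ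
      = ∑ n ∈ Finset.range D, ∑ i : Fin D, ∑ j : Fin D,
          (∫ ω, s i ω * (starRingEnd ℂ) (s j ω) ∂μ) * g n i j := by
    simp only [key]
    rw [integral_finset_sum _ (fun n _ => integrable_finset_sum _ fun i _ =>
      integrable_finset_sum _ fun j _ => (hint i j).mul_const _)]
    refine Finset.sum_congr rfl fun n _ => ?_
    rw [integral_finset_sum _ (fun i _ => integrable_finset_sum _ fun j _ =>
      (hint i j).mul_const _)]
    refine Finset.sum_congr rfl fun i _ => ?_
    rw [integral_finset_sum _ (fun j _ => (hint i j).mul_const _)]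
    refine Finset.sum_congr rfl fun j _ => ?_
    simpa only [smul_eq_mul] using integral_smul_const (fun ω => s i ω * (starRingEnd ℂ) (s j ω)) (g n i j) (μ := μ)
  have hexp : ∀ i j : Fin D,
      ∫ ω, s i ω * (starRingEnd ℂ) (s j ω) ∂μ = if i = j then 1 else 0 := by
    intro i j
    by_cases hij : i = j
    · subst hij
      have hae : (fun ω => s i ω * (starRingEnd ℂ) (s i ω)) =ᵐ[μ] fun _ => (1 : ℂ) := by
        filter_upwards [hunit i] with ω h
        rw [Complex.mul_conj, Complex.normSq_eq_norm_sq, h]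
        norm_num
      rw [integral_congr_ae hae]
      simp
    · rw [huncorr i j hij]
      simp [hij]
  rw [hI]
  simp only [hexp, ite_mul, one_mul, zero_mul, Finset.sum_ite_eq, Finset.mem_univ, if_true]
  -- now goal: ∑ n ∈ range D, ∑ i, g n i i = if ...
  have hcond : ∀ n ∈ Finset.range D,
      ((resFin D hD0 (n : ℤ) = resFin D hD0 (((n : ℤ) - k) % (D : ℤ))) ↔ (D : ℤ) ∣ k) := by
    intro n hn
    have hD' : (D : ℤ) ≠ 0 := by exact_mod_cast hD0.ne'
    have hn' : (n : ℤ) % (D : ℤ) = (n : ℤ) := by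
      apply Int.emod_eq_of_lt (by positivity)
      exact_mod_cast Finset.mem_range.mp hn
    have hmm : (((n : ℤ) - k) % (D : ℤ)) % (D : ℤ) = ((n : ℤ) - k) % (D : ℤ) :=
      Int.emod_emod_of_dvd _ dvd_rfl
    have hnn1 : 0 ≤ (n : ℤ) % (D : ℤ) := Int.emod_nonneg _ hD'
    have hnn2 : 0 ≤ ((n : ℤ) - k) % (D : ℤ) := Int.emod_nonneg _ hD'
    have hfin : (resFin D hD0 (n : ℤ) = resFin D hD0 (((n : ℤ) - k) % (D : ℤ)))
        ↔ ((n : ℤ) % (D : ℤ) = ((n : ℤ) - k) % (D : ℤ)) := by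
      rw [Fin.ext_iff]
      simp only [resFin]
      rw [hmm]
      omega
    rw [hfin, Int.emod_eq_emod_iff_emod_sub_eq_zero,
      show (n : ℤ) - ((n : ℤ) - k) = k by ring]
    exact ⟨Int.dvd_of_emod_eq_zero, fun h => Int.emod_eq_zero_of_dvd h⟩
  have hrow : ∀ n ∈ Finset.range D,
      ∑ i : Fin D, g n i i = (D : ℂ)⁻¹ * ((if (D : ℤ) ∣ k then 1 else 0) * c n) := by
    intro n hn
    simp only [hg]
    rw [← Finset.mul_sum, ← Finset.sum_mul]
    rw [complete_of_orth φ horth]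
    rw [if_congr (hcond n hn) rfl rfl]
  rw [Finset.sum_congr rfl hrow]
  by_cases hk : (D : ℤ) ∣ k
  · obtain ⟨t, ht⟩ := id hk
    have hcn : ∀ n : ℕ, c n
        = Complex.exp (-(2 * (Real.pi : ℂ) * Complex.I * (l : ℂ) * (n : ℂ)) / (D : ℂ)) := by
      intro n
      simp only [hc]
      have harg : -(2 * (Real.pi : ℂ) * Complex.I * (l : ℂ) * ((n : ℂ) - (k : ℂ))) / (D : ℂ)
          = -(2 * (Real.pi : ℂ) * Complex.I * (l : ℂ) * (n : ℂ)) / (D : ℂ)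
            + ((l * t : ℤ) : ℂ) * (2 * (Real.pi : ℝ) * Complex.I) := by
        have hk' : (k : ℂ) = (D : ℂ) * (t : ℂ) := by exact_mod_cast congrArg (Int.cast : ℤ → ℂ) ht
        rw [hk']
        push_cast
        field_simp
        ring
      rw [harg, Complex.exp_add, Complex.exp_int_mul_two_pi_mul_I, mul_one]
    simp only [if_pos hk, one_mul]
    rw [← Finset.mul_sum]
    rw [Finset.sum_congr rfl fun n _ => hcn n]
    rw [sum_exp_eq D hD0 l]
    by_cases hl : (D : ℤ) ∣ l
    · simp [hl, hk, inv_mul_cancel₀ hDC]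
    · simp [hl, hk]
  · simp [hk]
end

section
/- Let M, N be positive integers and set D = M·N. Let (Ω, μ) be a probability space and let s : Fin D → Ω → ℂ be random data symbols such that |s_i(ω)| = 1 for μ-almost every ω and every i, each product s_i · conj(s_j) is integrable, and E[s_i · conj(s_j)] = 0 for all i ≠ j. Let (φ_i)_{i ∈ Fin D} be an orthonormal basis of ℂ^D, let x(ω)[n] = Σ_{i=0}^{D−1} s_i(ω) · φ_i[n], let h : ℤ × ℤ → ℂ be a channel spreading function supported within {0,…,D−1} × {0,…,D−1}, and let y(ω)[n] = Σ_{k',l'} h[k',l'] · x(ω)[(n−k') mod D] · exp(2πi·l'·(n−k')/D) be the noiseless received signal. Then the cross-ambiguity channel estimate ĥ(ω)[k,l] := A_{y(ω),x(ω)}[k,l] is unbiased: E[ĥ[k,l]] = h[k,l] for all k, l ∈ {0,…,D−1}. -/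
open MeasureTheory
open Matrix

/-- For data-modulated waveforms on any orthonormal basis of `ℂ^D`, with unit-modulus,
pairwise-uncorrelated symbols, the cross-ambiguity function of the noiseless received
signal with the transmitted signal is an unbiased estimator of the channel spreading
function on `{0,…,D-1} × {0,…,D-1}`. -/
theorem stmt2 (M N : ℕ) (hM : 0 < M) (hN : 0 < N) (D : ℕ) (hD : D = M * N)
    {Ω : Type*} [MeasurableSpace Ω] (μ : Measure Ω) [IsProbabilityMeasure μ]
    (s : Fin D → Ω → ℂ)
    (hunit : ∀ i : Fin D, ∀ᵐ ω ∂μ, ‖s i ω‖ = 1)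
    (hint : ∀ i j : Fin D, Integrable (fun ω => s i ω * (starRingEnd ℂ) (s j ω)) μ)
    (huncorr : ∀ i j : Fin D, i ≠ j → ∫ ω, s i ω * (starRingEnd ℂ) (s j ω) ∂μ = 0)
    (φ : Fin D → (Fin D → ℂ))
    (horth : ∀ i j : Fin D,
      ∑ n : Fin D, φ i n * (starRingEnd ℂ) (φ j n) = if i = j then 1 else 0)
    (hspan : Submodule.span ℂ (Set.range φ) = ⊤)
    (x : Ω → ℤ → ℂ)
    (hx : ∀ (ω : Ω) (n : ℤ), x ω n = ∑ i : Fin D, s i ω * perExt D (φ i) n)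
    (h : ℤ × ℤ → ℂ)
    (hsupp : ∀ p : ℤ × ℤ, h p ≠ 0 →
      0 ≤ p.1 ∧ p.1 < (D : ℤ) ∧ 0 ≤ p.2 ∧ p.2 < (D : ℤ))
    (y : Ω → ℤ → ℂ)
    (hy : ∀ (ω : Ω) (n : ℤ), y ω n =
      ∑ᶠ p : ℤ × ℤ, h p * x ω ((n - p.1) % (D : ℤ)) *
        Complex.exp (2 * (Real.pi : ℂ) * Complex.I * (p.2 : ℂ) * ((n : ℂ) - (p.1 : ℂ)) / (D : ℂ))) :
    ∀ k l : ℤ, 0 ≤ k → k < (D : ℤ) → 0 ≤ l → l < (D : ℤ) →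
      ∫ ω, crossAmb D (y ω) (x ω) k l ∂μ = h (k, l) := by
  intro k l hk0 hkD hl0 hlD
  have hD0 : 0 < D := hD ▸ Nat.mul_pos hM hN
  have hDz : (D : ℂ) ≠ 0 := Nat.cast_ne_zero.mpr hD0.ne'
  have hDzi : ((D : ℤ) : ℤ) ≠ 0 := by exact_mod_cast hD0.ne'
  have hDpos : (0 : ℤ) < (D : ℤ) := by exact_mod_cast hD0
  -- column orthonormality
  have hcol : ∀ a b : Fin D, ∑ i : Fin D, φ i a * (starRingEnd ℂ) (φ i b)
      = if a = b then 1 else 0 := by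
    have hU : (Matrix.of φ) * (Matrix.of φ)ᴴ = 1 := by
      ext i j
      simpa [Matrix.mul_apply, Matrix.conjTranspose_apply, Matrix.one_apply] using horth i j
    have hU' := mul_eq_one_comm.mp hU
    intro a b
    have h2 := congrArg (fun m : Matrix (Fin D) (Fin D) ℂ => m a b) hU'
    simp only [Matrix.mul_apply, Matrix.conjTranspose_apply, Matrix.one_apply,
      Matrix.of_apply] at h2
    have h3 := congrArg (starRingEnd ℂ) h2
    simpa only [map_sum, _root_.map_mul, Complex.conj_conj, apply_ite (starRingEnd ℂ),
      _root_.map_one, map_zero, starRingEnd_apply, star_mul', star_star] using h3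
  -- indices
  have hmodlt : ∀ a : ℤ, (a % (D : ℤ)).toNat < D := by
    intro a
    have h1 := Int.emod_nonneg a hDzi
    have h2 := Int.emod_lt_of_pos a hDpos
    omega
  have hper : ∀ (v : Fin D → ℂ) (a : ℤ), perExt D v a = v ⟨(a % (D : ℤ)).toNat, hmodlt a⟩ := by
    intro v a
    simp [perExt, hmodlt a]
  -- expectation of symbol correlations
  have hE : ∀ i j : Fin D, ∫ ω, s i ω * (starRingEnd ℂ) (s j ω) ∂μ
      = if i = j then 1 else 0 := by
    intro i j
    by_cases hij : i = j
    · subst hij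
      simp only [if_pos rfl]
      have hae : (fun ω => s i ω * (starRingEnd ℂ) (s i ω)) =ᵐ[μ] fun _ => (1 : ℂ) := by
        filter_upwards [hunit i] with ω hω
        rw [Complex.mul_conj]
        rw [← Complex.sq_norm, hω]
        norm_num
      rw [integral_congr_ae hae, integral_const, probReal_univ]
      simp
    · rw [if_neg hij]; exact huncorr i j hij
  -- product expansion
  have hprod : ∀ (ω : Ω) (a b : ℤ), x ω a * (starRingEnd ℂ) (x ω b)
      = ∑ i : Fin D, ∑ j : Fin D,
          (perExt D (φ i) a * (starRingEnd ℂ) (perExt D (φ j) b)) *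
            (s i ω * (starRingEnd ℂ) (s j ω)) := by
    intro ω a b
    rw [hx, hx, map_sum, Finset.sum_mul_sum]
    refine Finset.sum_congr rfl fun i _ => Finset.sum_congr rfl fun j _ => ?_
    rw [_root_.map_mul]
    ring
  have hInt : ∀ a b : ℤ, Integrable (fun ω => x ω a * (starRingEnd ℂ) (x ω b)) μ := by
    intro a b
    have heq : (fun ω => x ω a * (starRingEnd ℂ) (x ω b))
        = fun ω => ∑ i : Fin D, ∑ j : Fin D,
            (perExt D (φ i) a * (starRingEnd ℂ) (perExt D (φ j) b)) *
              (s i ω * (starRingEnd ℂ) (s j ω)) := funext fun ω => hprod ω a b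
    rw [heq]
    exact integrable_finset_sum _ fun i _ =>
      integrable_finset_sum _ fun j _ => (hint i j).const_mul _
  have hxx : ∀ a b : ℤ, ∫ ω, x ω a * (starRingEnd ℂ) (x ω b) ∂μ
      = if a % (D : ℤ) = b % (D : ℤ) then 1 else 0 := by
    intro a b
    have heq : (fun ω => x ω a * (starRingEnd ℂ) (x ω b))
        = fun ω => ∑ i : Fin D, ∑ j : Fin D,
            (perExt D (φ i) a * (starRingEnd ℂ) (perExt D (φ j) b)) *
              (s i ω * (starRingEnd ℂ) (s j ω)) := funext fun ω => hprod ω a b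
    rw [heq, integral_finset_sum _ fun i _ =>
      integrable_finset_sum _ fun j _ => (hint i j).const_mul _]
    have step1 : ∀ i : Fin D, i ∈ Finset.univ →
        (∫ ω, ∑ j : Fin D, (perExt D (φ i) a * (starRingEnd ℂ) (perExt D (φ j) b)) *
            (s i ω * (starRingEnd ℂ) (s j ω)) ∂μ)
        = perExt D (φ i) a * (starRingEnd ℂ) (perExt D (φ i) b) := by
      intro i _
      rw [integral_finset_sum _ fun j _ => (hint i j).const_mul _]
      have : ∀ j : Fin D, j ∈ Finset.univ →
          (∫ ω, (perExt D (φ i) a * (starRingEnd ℂ) (perExt D (φ j) b)) *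
              (s i ω * (starRingEnd ℂ) (s j ω)) ∂μ)
          = (perExt D (φ i) a * (starRingEnd ℂ) (perExt D (φ j) b)) *
              (if i = j then 1 else 0) := by
        intro j _
        rw [integral_const_mul, hE]
      rw [Finset.sum_congr rfl this]
      simp [Finset.sum_ite_eq]
    rw [Finset.sum_congr rfl step1]
    simp only [hper]
    rw [hcol]
    by_cases hab : a % (D : ℤ) = b % (D : ℤ)
    · rw [if_pos (by rw [Fin.mk_eq_mk, hab]), if_pos hab]
    · rw [if_neg, if_neg hab]
      rw [Fin.mk_eq_mk]
      have h1 := Int.emod_nonneg a hDzi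
      have h2 := Int.emod_nonneg b hDzi
      omega
  -- the support finset
  set S : Finset (ℤ × ℤ) := Finset.Icc (0, 0) ((D : ℤ) - 1, (D : ℤ) - 1) with hSdef
  have hmemS : ∀ p : ℤ × ℤ, p ∈ S ↔
      (0 ≤ p.1 ∧ p.1 < (D : ℤ) ∧ 0 ≤ p.2 ∧ p.2 < (D : ℤ)) := by
    intro p
    rw [hSdef, Finset.mem_Icc, Prod.le_def, Prod.le_def]
    constructor <;> intro hh <;> simp_all <;> omega
  have hyS : ∀ (ω : Ω) (n : ℤ), y ω n = ∑ p ∈ S, h p * x ω ((n - p.1) % (D : ℤ)) *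
      Complex.exp (2 * (Real.pi : ℂ) * Complex.I * (p.2 : ℂ) *
        ((n : ℂ) - (p.1 : ℂ)) / (D : ℂ)) := by
    intro ω n
    rw [hy]
    apply finsum_eq_sum_of_support_subset
    intro p hp
    have hp0 : h p ≠ 0 := by
      intro h0
      simp [Function.mem_support, h0] at hp
    obtain ⟨b1, b2, b3, b4⟩ := hsupp p hp0
    exact (hmemS p).mpr ⟨b1, b2, b3, b4⟩
  -- expand the ambiguity function
  have hmain : ∀ ω : Ω, crossAmb D (y ω) (x ω) k l
      = ∑ p ∈ S, ∑ n ∈ Finset.range D,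
          ((D : ℂ)⁻¹ * (h p *
            Complex.exp (2 * (Real.pi : ℂ) * Complex.I * (p.2 : ℂ) *
              ((n : ℂ) - (p.1 : ℂ)) / (D : ℂ)) *
            Complex.exp (-(2 * (Real.pi : ℂ) * Complex.I * (l : ℂ) *
              ((n : ℂ) - (k : ℂ))) / (D : ℂ))))
          * (x ω (((n : ℤ) - p.1) % (D : ℤ)) *
              (starRingEnd ℂ) (x ω (((n : ℤ) - k) % (D : ℤ)))) := by
    intro ω
    unfold crossAmb
    simp only [hyS, Finset.sum_mul]
    rw [Finset.sum_comm, Finset.mul_sum]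
    refine Finset.sum_congr rfl fun p _ => ?_
    rw [Finset.mul_sum]
    refine Finset.sum_congr rfl fun n _ => ?_
    push_cast
    ring
  simp only [hmain]
  rw [integral_finset_sum _ fun p _ =>
    integrable_finset_sum _ fun n _ => (hInt _ _).const_mul _]
  have hstep : ∀ p ∈ S, (∫ ω, ∑ n ∈ Finset.range D,
        ((D : ℂ)⁻¹ * (h p *
          Complex.exp (2 * (Real.pi : ℂ) * Complex.I * (p.2 : ℂ) *
            ((n : ℂ) - (p.1 : ℂ)) / (D : ℂ)) *
          Complex.exp (-(2 * (Real.pi : ℂ) * Complex.I * (l : ℂ) *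
            ((n : ℂ) - (k : ℂ))) / (D : ℂ))))
        * (x ω (((n : ℤ) - p.1) % (D : ℤ)) *
            (starRingEnd ℂ) (x ω (((n : ℤ) - k) % (D : ℤ)))) ∂μ)
      = ∑ n ∈ Finset.range D,
        ((D : ℂ)⁻¹ * (h p *
          Complex.exp (2 * (Real.pi : ℂ) * Complex.I * (p.2 : ℂ) *
            ((n : ℂ) - (p.1 : ℂ)) / (D : ℂ)) *
          Complex.exp (-(2 * (Real.pi : ℂ) * Complex.I * (l : ℂ) *
            ((n : ℂ) - (k : ℂ))) / (D : ℂ))))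
        * (if p.1 = k then 1 else 0) := by
    intro p hp
    rw [integral_finset_sum _ fun n _ => (hInt _ _).const_mul _]
    refine Finset.sum_congr rfl fun n _ => ?_
    rw [integral_const_mul, hxx]
    have hb := (hmemS p).mp hp
    have hiff : (((n : ℤ) - p.1) % (D : ℤ) % (D : ℤ) = ((n : ℤ) - k) % (D : ℤ) % (D : ℤ))
        ↔ (p.1 = k) := by
      rw [Int.emod_emod_of_dvd _ dvd_rfl, Int.emod_emod_of_dvd _ dvd_rfl,
        Int.emod_eq_emod_iff_emod_sub_eq_zero]
      constructor
      · intro h0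
        obtain ⟨c, hc⟩ := Int.dvd_of_emod_eq_zero h0
        have hc0 : c = 0 := by
          rcases lt_trichotomy c 0 with hcneg | hc0 | hcpos
          · have h3 : (D : ℤ) * c ≤ (D : ℤ) * (-1) := by
              apply mul_le_mul_of_nonneg_left _ hDpos.le
              omega
            exfalso; linarith [hb.1, hb.2.1, hk0, hkD, hc, h3]
          · exact hc0
          · have h3 : (D : ℤ) * 1 ≤ (D : ℤ) * c := by
              apply mul_le_mul_of_nonneg_left _ hDpos.le
              omega
            exfalso; linarith [hb.1, hb.2.1, hk0, hkD, hc, h3]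
        rw [hc0, mul_zero] at hc
        omega
      · intro h0
        rw [h0]
        simp
    exact congrArg _ (if_congr hiff rfl rfl)
  rw [Finset.sum_congr rfl hstep]
  -- now a purely deterministic sum
  have hklS : ((k, l) : ℤ × ℤ) ∈ S := (hmemS (k, l)).mpr ⟨hk0, hkD, hl0, hlD⟩
  rw [Finset.sum_eq_single_of_mem (k, l) hklS]
  · -- diagonal term
    have hterm : ∀ n ∈ Finset.range D,
        ((D : ℂ)⁻¹ * (h (k, l) *
          Complex.exp (2 * (Real.pi : ℂ) * Complex.I * (((k, l).2 : ℤ) : ℂ) *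
            ((n : ℂ) - ((((k, l).1 : ℤ)) : ℂ)) / (D : ℂ)) *
          Complex.exp (-(2 * (Real.pi : ℂ) * Complex.I * (l : ℂ) *
            ((n : ℂ) - (k : ℂ))) / (D : ℂ))))
        * (if ((k, l) : ℤ × ℤ).1 = k then (1:ℂ) else 0)
        = (D : ℂ)⁻¹ * h (k, l) := by
      intro n _
      rw [if_pos rfl, mul_one]
      have hexp1 : Complex.exp (2 * (Real.pi : ℂ) * Complex.I * (l : ℂ) *
            ((n : ℂ) - (k : ℂ)) / (D : ℂ)) *
          Complex.exp (-(2 * (Real.pi : ℂ) * Complex.I * (l : ℂ) *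
            ((n : ℂ) - (k : ℂ))) / (D : ℂ)) = 1 := by
        rw [← Complex.exp_add, show (2 * (Real.pi : ℂ) * Complex.I * (l : ℂ) *
            ((n : ℂ) - (k : ℂ)) / (D : ℂ)) + (-(2 * (Real.pi : ℂ) * Complex.I * (l : ℂ) *
            ((n : ℂ) - (k : ℂ))) / (D : ℂ)) = 0 from by ring, Complex.exp_zero]
      calc ((D : ℂ)⁻¹ * (h (k, l) *
            Complex.exp (2 * (Real.pi : ℂ) * Complex.I * (l : ℂ) *
              ((n : ℂ) - (k : ℂ)) / (D : ℂ)) *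
            Complex.exp (-(2 * (Real.pi : ℂ) * Complex.I * (l : ℂ) *
              ((n : ℂ) - (k : ℂ))) / (D : ℂ))))
          = (D : ℂ)⁻¹ * h (k, l) *
              (Complex.exp (2 * (Real.pi : ℂ) * Complex.I * (l : ℂ) *
                ((n : ℂ) - (k : ℂ)) / (D : ℂ)) *
              Complex.exp (-(2 * (Real.pi : ℂ) * Complex.I * (l : ℂ) *
                ((n : ℂ) - (k : ℂ))) / (D : ℂ))) := by ring
        _ = (D : ℂ)⁻¹ * h (k, l) := by rw [hexp1, mul_one]
    rw [Finset.sum_congr rfl hterm, Finset.sum_const, Finset.card_range, nsmul_eq_mul]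
    field_simp
  · -- off-diagonal terms vanish
    intro p hp hne
    by_cases hp1 : p.1 = k
    · -- geometric sum vanishes
      have hp2 : p.2 ≠ l := by
        intro h2
        exact hne (Prod.ext hp1 h2)
      have hb := (hmemS p).mp hp
      set w : ℂ := 2 * (Real.pi : ℂ) * Complex.I * ((p.2 : ℂ) - (l : ℂ)) / (D : ℂ) with hwdef
      set z : ℂ := Complex.exp w with hzdef
      have hterm : ∀ n ∈ Finset.range D,
          ((D : ℂ)⁻¹ * (h p *
            Complex.exp (2 * (Real.pi : ℂ) * Complex.I * (p.2 : ℂ) *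
              ((n : ℂ) - (p.1 : ℂ)) / (D : ℂ)) *
            Complex.exp (-(2 * (Real.pi : ℂ) * Complex.I * (l : ℂ) *
              ((n : ℂ) - (k : ℂ))) / (D : ℂ))))
          * (if p.1 = k then (1:ℂ) else 0)
          = ((D : ℂ)⁻¹ * h p * Complex.exp (-(w * (k : ℂ)))) * z ^ n := by
        intro n _
        rw [if_pos hp1, mul_one]
        have e12 : Complex.exp (2 * (Real.pi : ℂ) * Complex.I * (p.2 : ℂ) *
              ((n : ℂ) - (p.1 : ℂ)) / (D : ℂ)) *
            Complex.exp (-(2 * (Real.pi : ℂ) * Complex.I * (l : ℂ) *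
              ((n : ℂ) - (k : ℂ))) / (D : ℂ))
            = Complex.exp (-(w * (k : ℂ))) * z ^ n := by
          rw [hzdef, ← Complex.exp_nat_mul, ← Complex.exp_add, ← Complex.exp_add]
          congr 1
          rw [hwdef, hp1]
          push_cast
          ring
        calc ((D : ℂ)⁻¹ * (h p *
              Complex.exp (2 * (Real.pi : ℂ) * Complex.I * (p.2 : ℂ) *
                ((n : ℂ) - (p.1 : ℂ)) / (D : ℂ)) *
              Complex.exp (-(2 * (Real.pi : ℂ) * Complex.I * (l : ℂ) *
                ((n : ℂ) - (k : ℂ))) / (D : ℂ))))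
            = (D : ℂ)⁻¹ * h p *
                (Complex.exp (2 * (Real.pi : ℂ) * Complex.I * (p.2 : ℂ) *
                  ((n : ℂ) - (p.1 : ℂ)) / (D : ℂ)) *
                Complex.exp (-(2 * (Real.pi : ℂ) * Complex.I * (l : ℂ) *
                  ((n : ℂ) - (k : ℂ))) / (D : ℂ))) := by ring
          _ = (D : ℂ)⁻¹ * h p * (Complex.exp (-(w * (k : ℂ))) * z ^ n) := by rw [e12]
          _ = ((D : ℂ)⁻¹ * h p * Complex.exp (-(w * (k : ℂ)))) * z ^ n := by ring
      rw [Finset.sum_congr rfl hterm, ← Finset.mul_sum]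
      have hzD : z ^ D = 1 := by
        rw [hzdef, ← Complex.exp_nat_mul]
        have : (D : ℂ) * w = ((p.2 - l : ℤ) : ℂ) * (2 * (Real.pi : ℂ) * Complex.I) := by
          rw [hwdef]
          push_cast
          field_simp
        rw [this, Complex.exp_int_mul_two_pi_mul_I]
      have hz1 : z ≠ 1 := by
        intro hz
        rw [hzdef, Complex.exp_eq_one_iff] at hz
        obtain ⟨m, hm⟩ := hz
        have h2pi : (2 * (Real.pi : ℂ) * Complex.I) ≠ 0 := by
          simp [Real.pi_ne_zero, Complex.I_ne_zero]
        have key : (2 * (Real.pi : ℂ) * Complex.I) * (((p.2 : ℂ) - (l : ℂ)) / (D : ℂ))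
            = (2 * (Real.pi : ℂ) * Complex.I) * (m : ℂ) := by
          rw [hwdef] at hm
          linear_combination hm
        have hdiv := mul_left_cancel₀ h2pi key
        have hcast : ((p.2 - l : ℤ) : ℂ) = ((m * (D : ℤ) : ℤ) : ℂ) := by
          push_cast
          rw [div_eq_iff hDz] at hdiv
          exact hdiv
        have hint : (p.2 - l : ℤ) = m * (D : ℤ) := by exact_mod_cast hcast
        rcases lt_trichotomy m 0 with hmneg | hm0 | hmpos
        · have h3 : m * (D : ℤ) ≤ (-1) * (D : ℤ) := by
            apply mul_le_mul_of_nonneg_right _ hDpos.le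
            omega
          linarith [hb.2.2.1, hb.2.2.2, hl0, hlD, hint, h3]
        · rw [hm0, zero_mul] at hint
          omega
        · have h3 : 1 * (D : ℤ) ≤ m * (D : ℤ) := by
            apply mul_le_mul_of_nonneg_right _ hDpos.le
            omega
          linarith [hb.2.2.1, hb.2.2.2, hl0, hlD, hint, h3]
      rw [geom_sum_eq hz1, hzD]
      simp
    · simp [hp1]
end

section
/- Let M, N be positive integers and set D = M·N. Let (φ_i)_{i ∈ Fin D} be any orthonormal basis of ℂ^D (with inner product ⟨u,v⟩ = Σ_{n=0}^{D−1} u[n]·conj(v[n])). Then for all k, l ∈ ℤ, the sum of the self-ambiguity functions of the basis elements equals an ideal thumbtack: Σ_{i=0}^{D−1} A_{φ_i,φ_i}[k,l] = 1 if D divides both k and l, and equals 0 otherwise. -/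
/-- Completeness relation for an orthonormal family indexed by the same type. -/
lemma complete_rel {D : ℕ} (φ : Fin D → (Fin D → ℂ))
    (horth : ∀ i j : Fin D,
      ∑ n : Fin D, φ i n * (starRingEnd ℂ) (φ j n) = if i = j then 1 else 0)
    (a b : Fin D) :
    ∑ i : Fin D, φ i a * (starRingEnd ℂ) (φ i b) = if a = b then 1 else 0 := by
  have hU : (Matrix.of φ) * Matrix.conjTranspose (Matrix.of φ) = 1 := by
    ext i j
    simpa [Matrix.mul_apply, Matrix.conjTranspose_apply, Matrix.one_apply] using horth i j
  have hU' : Matrix.conjTranspose (Matrix.of φ) * (Matrix.of φ) = 1 := mul_eq_one_comm.mp hU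
  have h := congrFun (congrFun hU' b) a
  simp only [Matrix.mul_apply, Matrix.conjTranspose_apply, Matrix.one_apply,
    Matrix.of_apply] at h
  calc ∑ i : Fin D, φ i a * (starRingEnd ℂ) (φ i b)
      = ∑ i : Fin D, (starRingEnd ℂ) (φ i b) * φ i a :=
        Finset.sum_congr rfl fun i _ => mul_comm _ _
    _ = if b = a then 1 else 0 := h
    _ = if a = b then 1 else 0 := by simp [eq_comm]

/-- For any orthonormal basis of `ℂ^D`, the sum of the self-ambiguity functions of the
basis elements is an ideal thumbtack: it equals `1` when `D ∣ k` and `D ∣ l`,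
and `0` otherwise. -/
theorem stmt3 (M N : ℕ) (hM : 0 < M) (hN : 0 < N) (D : ℕ) (hD : D = M * N)
    (φ : Fin D → (Fin D → ℂ))
    (horth : ∀ i j : Fin D,
      ∑ n : Fin D, φ i n * (starRingEnd ℂ) (φ j n) = if i = j then 1 else 0)
    (hspan : Submodule.span ℂ (Set.range φ) = ⊤) :
    ∀ k l : ℤ, ∑ i : Fin D, crossAmb D (perExt D (φ i)) (perExt D (φ i)) k l =
      if (D : ℤ) ∣ k ∧ (D : ℤ) ∣ l then 1 else 0 := by
  classical
  intro k l
  have hD0 : 0 < D := hD ▸ Nat.mul_pos hM hN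
  have hDz : ((D : ℤ)) ≠ 0 := by exact_mod_cast hD0.ne'
  have hDzc : ((D : ℂ)) ≠ 0 := by exact_mod_cast hD0.ne'
  -- Step 1: swap the sums
  have hswap : ∑ i : Fin D, crossAmb D (perExt D (φ i)) (perExt D (φ i)) k l
      = (D : ℂ)⁻¹ * ∑ n ∈ Finset.range D,
          (∑ i : Fin D, perExt D (φ i) (n : ℤ) *
            (starRingEnd ℂ) (perExt D (φ i) (((n : ℤ) - k) % (D : ℤ)))) *
          Complex.exp (-(2 * (Real.pi : ℂ) * Complex.I * (l : ℂ) * ((n : ℂ) - (k : ℂ))) / (D : ℂ)) := by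
    unfold crossAmb
    rw [← Finset.mul_sum, Finset.sum_comm]
    congr 1
    refine Finset.sum_congr rfl fun n _ => ?_
    rw [Finset.sum_mul]
  rw [hswap]
  -- Step 2: evaluate the inner (completeness) sum
  have key : ∀ n ∈ Finset.range D,
      (∑ i : Fin D, perExt D (φ i) (n : ℤ) *
        (starRingEnd ℂ) (perExt D (φ i) (((n : ℤ) - k) % (D : ℤ))))
      = if ((D : ℤ) ∣ k) then 1 else 0 := by
    intro n hn
    rw [Finset.mem_range] at hn
    have hnn : ((n : ℤ) % (D : ℤ)) = (n : ℤ) :=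
      Int.emod_eq_of_lt (Int.natCast_nonneg n) (by exact_mod_cast hn)
    have hmnn : (0 : ℤ) ≤ ((n : ℤ) - k) % (D : ℤ) :=
      Int.emod_nonneg _ hDz
    have hmlt : ((n : ℤ) - k) % (D : ℤ) < (D : ℤ) :=
      Int.emod_lt_of_pos _ (by exact_mod_cast hD0)
    have hmm : (((n : ℤ) - k) % (D : ℤ)) % (D : ℤ) = ((n : ℤ) - k) % (D : ℤ) :=
      Int.emod_emod_of_dvd _ dvd_rfl
    have ha : ((n : ℤ) % (D : ℤ)).toNat < D := by
      rw [hnn]; exact_mod_cast hn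
    have hb : ((((n : ℤ) - k) % (D : ℤ)) % (D : ℤ)).toNat < D := by
      rw [hmm]; exact (Int.toNat_lt hmnn).mpr hmlt
    have hpe1 : ∀ i, perExt D (φ i) (n : ℤ) = φ i ⟨((n : ℤ) % (D : ℤ)).toNat, ha⟩ := by
      intro i; unfold perExt; rw [dif_pos ha]
    have hpe2 : ∀ i, perExt D (φ i) (((n : ℤ) - k) % (D : ℤ)) =
        φ i ⟨((((n : ℤ) - k) % (D : ℤ)) % (D : ℤ)).toNat, hb⟩ := by
      intro i; unfold perExt; rw [dif_pos hb]
    have heq : (⟨((n : ℤ) % (D : ℤ)).toNat, ha⟩ : Fin D)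
        = ⟨((((n : ℤ) - k) % (D : ℤ)) % (D : ℤ)).toNat, hb⟩ ↔ (D : ℤ) ∣ k := by
      constructor
      · intro h
        have h' : ((n : ℤ) % (D : ℤ)).toNat = ((((n : ℤ) - k) % (D : ℤ)) % (D : ℤ)).toNat :=
          congrArg Fin.val h
        have h'' : (n : ℤ) % (D : ℤ) = ((n : ℤ) - k) % (D : ℤ) := by
          have e1 : (((n : ℤ) % (D : ℤ)).toNat : ℤ) =
              (((((n : ℤ) - k) % (D : ℤ)) % (D : ℤ)).toNat : ℤ) := by exact_mod_cast h'
          rwa [Int.toNat_of_nonneg (Int.emod_nonneg _ hDz),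
            Int.toNat_of_nonneg (Int.emod_nonneg _ hDz), hmm] at e1
        have h3 := Int.emod_eq_emod_iff_emod_sub_eq_zero.mp h''
        have hdvd : (D : ℤ) ∣ ((n : ℤ) - ((n : ℤ) - k)) := Int.dvd_of_emod_eq_zero h3
        simpa using hdvd
      · intro h
        have h'' : ((n : ℤ) - k) % (D : ℤ) = (n : ℤ) % (D : ℤ) := by
          rw [Int.emod_eq_emod_iff_emod_sub_eq_zero]
          have e : ((n : ℤ) - k - (n : ℤ)) = -k := by ring
          rw [e]
          exact Int.emod_eq_zero_of_dvd h.neg_right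
        apply Fin.ext
        show ((n : ℤ) % (D : ℤ)).toNat = ((((n : ℤ) - k) % (D : ℤ)) % (D : ℤ)).toNat
        rw [hmm, h'']
    simp only [hpe1, hpe2]
    rw [complete_rel φ horth]
    simp only [heq]
  rw [Finset.sum_congr rfl fun n hn => by rw [key n hn]]
  -- Step 3: case split on D ∣ k
  by_cases hk : (D : ℤ) ∣ k
  · simp only [hk, if_true, one_mul, true_and]
    obtain ⟨t, ht⟩ := hk
    have hk' : (k : ℂ) = (D : ℂ) * (t : ℂ) := by exact_mod_cast ht
    -- the exponential simplifies to a power of a fixed root of unity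
    have hexp : ∀ n ∈ Finset.range D,
        Complex.exp (-(2 * (Real.pi : ℂ) * Complex.I * (l : ℂ) * ((n : ℂ) - (k : ℂ))) / (D : ℂ))
        = Complex.exp (-(2 * (Real.pi : ℂ) * Complex.I * (l : ℂ)) / (D : ℂ)) ^ n := by
      intro n _
      have e1 : -(2 * (Real.pi : ℂ) * Complex.I * (l : ℂ) * ((n : ℂ) - (k : ℂ))) / (D : ℂ)
          = (n : ℕ) * (-(2 * (Real.pi : ℂ) * Complex.I * (l : ℂ)) / (D : ℂ))
            + ((l * t : ℤ) : ℂ) * (2 * (Real.pi : ℂ) * Complex.I) := by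
        rw [hk']
        push_cast
        field_simp
        ring
      rw [e1, Complex.exp_add, Complex.exp_int_mul_two_pi_mul_I, mul_one, Complex.exp_nat_mul]
    rw [Finset.sum_congr rfl hexp]
    by_cases hl : (D : ℤ) ∣ l
    · simp only [hl, if_true]
      obtain ⟨s, hs⟩ := hl
      have hl' : (l : ℂ) = (D : ℂ) * (s : ℂ) := by exact_mod_cast hs
      have hz : Complex.exp (-(2 * (Real.pi : ℂ) * Complex.I * (l : ℂ)) / (D : ℂ)) = 1 := by
        rw [← Complex.exp_int_mul_two_pi_mul_I (-s)]
        congr 1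
        rw [hl']
        push_cast
        field_simp
      rw [hz]
      simp [hDzc]
    · simp only [hl, if_false]
      set ζ := Complex.exp (-(2 * (Real.pi : ℂ) * Complex.I * (l : ℂ)) / (D : ℂ)) with hζ
      have hζD : ζ ^ D = 1 := by
        rw [hζ, ← Complex.exp_nat_mul, ← Complex.exp_int_mul_two_pi_mul_I (-l)]
        congr 1
        push_cast
        field_simp
      have hζ1 : ζ ≠ 1 := by
        intro h
        obtain ⟨m, hm⟩ := Complex.exp_eq_one_iff.mp (hζ.symm.trans h)
        have hπ : (Real.pi : ℂ) ≠ 0 := by exact_mod_cast Real.pi_ne_zero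
        have h2 : (2 : ℂ) * (Real.pi : ℂ) * Complex.I ≠ 0 := by
          simp [hπ, Complex.I_ne_zero]
        have h3 : (-(l : ℂ)) = (m : ℂ) * (D : ℂ) := by
          have hm' : -(2 * (Real.pi : ℂ) * Complex.I * (l : ℂ))
              = (m : ℂ) * (2 * (Real.pi : ℂ) * Complex.I) * (D : ℂ) := by
            field_simp at hm
            linear_combination (2 * (Real.pi : ℂ) * Complex.I) * hm
          apply mul_left_cancel₀ h2
          linear_combination hm'
        have h4 : (-l : ℤ) = m * D := by exact_mod_cast h3
        exact hl ⟨-m, by linarith⟩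
      rw [geom_sum_eq hζ1, hζD]
      simp
  · simp only [hk, if_false, zero_mul, Finset.sum_const_zero, mul_zero, false_and]
end

section
/- Let M, N be positive integers and set D = M·N. Let h : ℤ × ℤ → ℂ have finite support S = {(k,l) : h[k,l] ≠ 0}, and define the difference region K_S = {(k',l') ∈ ℤ×ℤ : S ∩ (S + (k',l')) ≠ ∅}. Let x : ℤ → ℂ be a D-periodic waveform whose self-ambiguity function is a local thumbtack on K_S, i.e., A_{x,x}[0,0] = 1 and A_{x,x}[k',l'] = 0 for all (k',l') ∈ K_S \ {(0,0)}. Let y[n] = Σ_{k',l'} h[k',l'] · x[(n−k') mod D] · exp(2πi·l'·(n−k')/D) be the noiseless received signal. Then the cross-ambiguity estimate recovers the channel exactly on its support: A_{y,x}[k,l] = h[k,l] for all (k,l) ∈ S. -/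
/-- Rotating a periodic sum by one. -/
lemma sum_rot (D : ℕ) (g : ℤ → ℂ) (hg : ∀ n : ℤ, g (n + (D : ℤ)) = g n) :
    ∑ n ∈ Finset.range D, g ((n : ℤ) + 1) = ∑ n ∈ Finset.range D, g (n : ℤ) := by
  have h1 : ∑ n ∈ Finset.range (D + 1), g (n : ℤ) =
      (∑ n ∈ Finset.range D, g ((n : ℤ) + 1)) + g 0 := by
    rw [Finset.sum_range_succ' (fun n : ℕ => g (n : ℤ))]
    push_cast
    simp [add_comm]
  have h2 : ∑ n ∈ Finset.range (D + 1), g (n : ℤ) =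
      (∑ n ∈ Finset.range D, g (n : ℤ)) + g D := by
    rw [Finset.sum_range_succ]
  have h3 : g (D : ℤ) = g 0 := by simpa using hg 0
  have := h1.symm.trans h2
  rw [h3] at this
  exact add_right_cancel this

/-- Shifting a periodic sum by any integer. -/
lemma sum_shift (D : ℕ) (f : ℤ → ℂ) (hf : ∀ n : ℤ, f (n + (D : ℤ)) = f n) (a : ℤ) :
    ∑ n ∈ Finset.range D, f ((n : ℤ) + a) = ∑ n ∈ Finset.range D, f (n : ℤ) := by
  induction a using Int.induction_on with
  | zero => simp
  | succ a ih =>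
      have := sum_rot D (fun m => f (m + a)) (fun n => by
        simpa [add_right_comm] using hf (n + a))
      simp only [add_assoc] at this ⊢
      rw [show ((1 : ℤ) + a) = a + 1 by ring] at this
      rw [this, ih]
  | pred a ih =>
      have := sum_rot D (fun m => f (m + (-(a + 1)))) (fun n => by
        simpa [add_right_comm] using hf (n + (-(a + 1))))
      have h' : ∑ n ∈ Finset.range D, f ((n : ℤ) + -a) =
          ∑ n ∈ Finset.range D, f ((n : ℤ) + -(a + 1)) := by
        rw [← this]
        apply Finset.sum_congr rfl
        intro n _
        norm_num
      have hgoal : ∑ n ∈ Finset.range D, f ((n : ℤ) + (-(a : ℤ) - 1)) =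
          ∑ n ∈ Finset.range D, f ((n : ℤ) + -((a : ℤ) + 1)) := by
        apply Finset.sum_congr rfl
        intro n _
        ring_nf
      rw [hgoal, ← h', ih]

/-- If the transmit waveform has a local thumbtack self-ambiguity on the difference
region `K_S` of the channel support `S`, then the cross-ambiguity estimate recovers
the channel exactly on `S`. -/
theorem stmt6 (M N : ℕ) (hM : 0 < M) (hN : 0 < N) (D : ℕ) (hD : D = M * N)
    (h : ℤ × ℤ → ℂ) (hfin : (Function.support h).Finite)
    (x : ℤ → ℂ) (hxper : ∀ n : ℤ, x (n + (D : ℤ)) = x n)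
    (hthumb0 : crossAmb D x x 0 0 = 1)
    (hthumb : ∀ k' l' : ℤ,
      (∃ q : ℤ × ℤ, h q ≠ 0 ∧ h (q.1 + k', q.2 + l') ≠ 0) →
      (k', l') ≠ (0, 0) → crossAmb D x x k' l' = 0)
    (y : ℤ → ℂ)
    (hy : ∀ n : ℤ, y n =
      ∑ᶠ p : ℤ × ℤ, h p * x ((n - p.1) % (D : ℤ)) *
        Complex.exp (2 * (Real.pi : ℂ) * Complex.I * (p.2 : ℂ) * ((n : ℂ) - (p.1 : ℂ)) / (D : ℂ))) :
    ∀ k l : ℤ, h (k, l) ≠ 0 → crossAmb D y x k l = h (k, l) := by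
  intro k l hkl
  have hD0 : 0 < D := hD ▸ Nat.mul_pos hM hN
  have hDc : (D : ℂ) ≠ 0 := Nat.cast_ne_zero.mpr hD0.ne'
  have hper : Function.Periodic x (D : ℤ) := hxper
  have hmod : ∀ n : ℤ, x (n % (D : ℤ)) = x n := by
    intro n
    rw [Int.emod_def, show n - (D : ℤ) * (n / (D : ℤ)) = n - (n / (D : ℤ)) * (D : ℤ) by ring]
    exact hper.sub_int_mul_eq (n / (D : ℤ))
  set S := hfin.toFinset with hS
  have hyS : ∀ n : ℤ, y n = ∑ p ∈ S, h p * x ((n - p.1) % (D : ℤ)) *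
      Complex.exp (2 * (Real.pi : ℂ) * Complex.I * (p.2 : ℂ) * ((n : ℂ) - (p.1 : ℂ)) / (D : ℂ)) := by
    intro n
    rw [hy n]
    apply finsum_eq_sum_of_support_subset
    intro p hp
    simp only [hS, Set.Finite.coe_toFinset]
    intro h0
    apply hp
    simp [Function.mem_support, h0]
  -- the key rewriting
  have key : crossAmb D y x k l = ∑ p ∈ S, h p *
      (Complex.exp (2 * (Real.pi : ℂ) * Complex.I * (p.2 : ℂ) * ((k : ℂ) - (p.1 : ℂ)) / (D : ℂ)) *
        crossAmb D x x (k - p.1) (l - p.2)) := by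
    unfold crossAmb
    simp only [hyS, Finset.sum_mul, Finset.mul_sum]
    rw [Finset.sum_comm]
    apply Finset.sum_congr rfl
    intro p _
    set c : ℂ := Complex.exp (2 * (Real.pi : ℂ) * Complex.I * (p.2 : ℂ) *
      ((k : ℂ) - (p.1 : ℂ)) / (D : ℂ)) with hc
    set F : ℤ → ℂ := fun m => x (m % (D : ℤ)) *
      (starRingEnd ℂ) (x ((m - (k - p.1)) % (D : ℤ))) *
      Complex.exp (-(2 * (Real.pi : ℂ) * Complex.I * ((l : ℂ) - (p.2 : ℂ)) *
        ((m : ℂ) - ((k : ℂ) - (p.1 : ℂ)))) / (D : ℂ)) with hF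
    have hFper : ∀ m : ℤ, F (m + (D : ℤ)) = F m := by
      intro m
      simp only [hF]
      have e1 : (m + (D : ℤ)) % (D : ℤ) = m % (D : ℤ) := by
        rw [show m + (D : ℤ) = m + (D : ℤ) * 1 by ring, Int.add_mul_emod_self_left]
      have e2 : (m + (D : ℤ) - (k - p.1)) % (D : ℤ) = (m - (k - p.1)) % (D : ℤ) := by
        rw [show m + (D : ℤ) - (k - p.1) = m - (k - p.1) + (D : ℤ) * 1 by ring,
          Int.add_mul_emod_self_left]
      rw [e1, e2]
      have e3 : (-(2 * (Real.pi : ℂ) * Complex.I * ((l : ℂ) - (p.2 : ℂ)) *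
            (((m + (D : ℤ) : ℤ) : ℂ) - ((k : ℂ) - (p.1 : ℂ)))) / (D : ℂ))
          = (-(2 * (Real.pi : ℂ) * Complex.I * ((l : ℂ) - (p.2 : ℂ)) *
            ((m : ℂ) - ((k : ℂ) - (p.1 : ℂ)))) / (D : ℂ)) + ((p.2 - l : ℤ) : ℂ) * (2 * (Real.pi : ℂ) * Complex.I) := by
        push_cast
        field_simp
        ring
      rw [e3, Complex.exp_add, Complex.exp_int_mul_two_pi_mul_I, mul_one]
    calc ∑ n ∈ Finset.range D, (D : ℂ)⁻¹ *
          (h p * x (((n : ℤ) - p.1) % (D : ℤ)) *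
            Complex.exp (2 * (Real.pi : ℂ) * Complex.I * (p.2 : ℂ) * (((n : ℤ) : ℂ) - (p.1 : ℂ)) / (D : ℂ)) *
            (starRingEnd ℂ) (x (((n : ℤ) - k) % (D : ℤ))) *
            Complex.exp (-(2 * (Real.pi : ℂ) * Complex.I * (l : ℂ) * ((n : ℂ) - (k : ℂ))) / (D : ℂ)))
        = ∑ n ∈ Finset.range D, ((D : ℂ)⁻¹ * h p * c) * F ((n : ℤ) - p.1) := by
          apply Finset.sum_congr rfl
          intro n _
          simp only [hF]
          have e2' : ((n : ℤ) - p.1 - (k - p.1)) = (n : ℤ) - k := by ring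
          rw [e2']
          have hexp : Complex.exp (2 * (Real.pi : ℂ) * Complex.I * (p.2 : ℂ) * (((n : ℤ) : ℂ) - (p.1 : ℂ)) / (D : ℂ)) *
              Complex.exp (-(2 * (Real.pi : ℂ) * Complex.I * (l : ℂ) * ((n : ℂ) - (k : ℂ))) / (D : ℂ))
              = c * Complex.exp (-(2 * (Real.pi : ℂ) * Complex.I * ((l : ℂ) - (p.2 : ℂ)) *
                ((((n : ℤ) - p.1 : ℤ) : ℂ) - ((k : ℂ) - (p.1 : ℂ)))) / (D : ℂ)) := by
            rw [hc, ← Complex.exp_add, ← Complex.exp_add]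
            congr 1
            push_cast
            field_simp
            ring
          linear_combination ((D : ℂ)⁻¹ * h p * x (((n : ℤ) - p.1) % (D : ℤ)) *
            (starRingEnd ℂ) (x (((n : ℤ) - k) % (D : ℤ)))) * hexp
      _ = ((D : ℂ)⁻¹ * h p * c) * ∑ n ∈ Finset.range D, F ((n : ℤ) - p.1) := by
          rw [← Finset.mul_sum]
      _ = ((D : ℂ)⁻¹ * h p * c) * ∑ n ∈ Finset.range D, F (n : ℤ) := by
          congr 1
          have := sum_shift D F hFper (-p.1)
          simpa [sub_eq_add_neg] using this
      _ = ∑ n ∈ Finset.range D, h p * (c * ((D : ℂ)⁻¹ *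
            (x (n : ℤ) * (starRingEnd ℂ) (x (((n : ℤ) - (k - p.1)) % (D : ℤ))) *
              Complex.exp (-(2 * (Real.pi : ℂ) * Complex.I * ((l - p.2 : ℤ) : ℂ) *
                ((n : ℂ) - ((k - p.1 : ℤ) : ℂ))) / (D : ℂ))))) := by
          rw [Finset.mul_sum]
          apply Finset.sum_congr rfl
          intro n _
          have hFn : F (n : ℤ) = x (n : ℤ) *
              (starRingEnd ℂ) (x (((n : ℤ) - (k - p.1)) % (D : ℤ))) *
              Complex.exp (-(2 * (Real.pi : ℂ) * Complex.I * ((l - p.2 : ℤ) : ℂ) *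
                ((n : ℂ) - ((k - p.1 : ℤ) : ℂ))) / (D : ℂ)) := by
            simp only [hF]
            rw [hmod]
            congr 2
            push_cast
            ring
          rw [hFn]
          ring
  rw [key]
  rw [Finset.sum_eq_single_of_mem (k, l) (hfin.mem_toFinset.mpr hkl)]
  · simp only [sub_self]
    rw [hthumb0]
    norm_num
  · intro p hpS hpne
    have hzero : crossAmb D x x (k - p.1) (l - p.2) = 0 := by
      apply hthumb
      · exact ⟨p, hfin.mem_toFinset.mp hpS, by simpa using hkl⟩
      · intro hc
        apply hpne
        have h1 : k - p.1 = 0 := by simpa using congrArg Prod.fst hc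
        have h2 : l - p.2 = 0 := by simpa using congrArg Prod.snd hc
        have : p.1 = k := by omega
        have : p.2 = l := by omega
        ext <;> omega
    rw [hzero, mul_zero, mul_zero]
end

section
/- Let M be a positive integer, let N = 2^p for a natural number p, and set D = M·N. For i ∈ {0,…,D−1}, define the OTSM basis vector φ_i ∈ ℂ^D by φ_i[n] = (1/√N) · (−1)^{⌊i/M⌋ ⊙ ⌊n/M⌋} if n ≡ i (mod M) and φ_i[n] = 0 otherwise, for n ∈ {0,…,D−1}, where a ⊙ b = Σ_t bit_t(a)·bit_t(b) is the bitwise dot product of the binary expansions of the natural numbers a and b. Then (φ_i)_{i=0}^{D−1} is an orthonormal basis of ℂ^D with respect to the inner product ⟨u,v⟩ = Σ_{n=0}^{D−1} u[n]·conj(v[n]). -/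
/-- Bitwise dot product of the binary expansions of two natural numbers:
`a ⊙ b = Σ_t bit_t(a)·bit_t(b)`. -/
def bitDot (a b : ℕ) : ℕ :=
  ∑ t ∈ Finset.range (a + b + 1), (a / 2 ^ t % 2) * (b / 2 ^ t % 2)

lemma bitDot_eq_sum (a b n : ℕ) (h : a + b + 1 ≤ n) :
    bitDot a b = ∑ t ∈ Finset.range n, (a / 2 ^ t % 2) * (b / 2 ^ t % 2) := by
  unfold bitDot
  refine Finset.sum_subset (Finset.range_subset_range.mpr h) ?_
  intro t ht hnt
  simp only [Finset.mem_range, not_lt] at hnt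
  have : a < 2 ^ t :=
    lt_of_lt_of_le (Nat.lt_two_pow_self (n := a)) (Nat.pow_le_pow_right (by norm_num) (by omega))
  rw [Nat.div_eq_of_lt this]; simp

lemma bitDot_step (a b : ℕ) :
    bitDot a b = a % 2 * (b % 2) + bitDot (a / 2) (b / 2) := by
  rcases Nat.eq_zero_or_pos (a + b) with h | h
  · obtain ⟨rfl, rfl⟩ : a = 0 ∧ b = 0 := by omega
    simp [bitDot]
  · have key : ∀ t : ℕ, ∀ x : ℕ, x / 2 ^ (t + 1) = (x / 2) / 2 ^ t := by
      intro t x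
      rw [Nat.div_div_eq_div_mul, pow_succ']
    have h2 : bitDot a b
        = ∑ t ∈ Finset.range (a + b + 1), (a / 2 ^ t % 2) * (b / 2 ^ t % 2) := rfl
    rw [h2, Finset.sum_range_succ']
    simp only [key, pow_zero, Nat.div_one]
    rw [add_comm]
    congr 1
    exact (bitDot_eq_sum (a/2) (b/2) (a+b) (by omega)).symm



lemma neg_one_pow_mod (m : ℕ) : ((-1:ℂ))^m = (-1)^(m % 2) := by
  conv_lhs => rw [← Nat.mod_add_div m 2]
  rw [pow_add, pow_mul]
  norm_num

lemma sum_range_two_mul (n : ℕ) (f : ℕ → ℂ) :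
    ∑ k ∈ Finset.range (2 * n), f k
      = ∑ q ∈ Finset.range n, (f (2 * q) + f (2 * q + 1)) := by
  induction n with
  | zero => simp
  | succ n ih =>
    rw [Nat.mul_succ, Finset.sum_range_succ, Finset.sum_range_succ,
      Finset.sum_range_succ, ih]
    ring

lemma walsh_sum (p : ℕ) : ∀ c < 2 ^ p,
    ∑ k ∈ Finset.range (2 ^ p), ((-1 : ℂ)) ^ bitDot c k
      = if c = 0 then ((2 ^ p : ℕ) : ℂ) else 0 := by
  induction p with
  | zero =>
    intro c hc
    interval_cases c
    simp [bitDot]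
  | succ p ih =>
    intro c hc
    have h2 : (2:ℕ) ^ (p+1) = 2 * 2 ^ p := by ring
    rw [h2, sum_range_two_mul]
    have he : ∀ q : ℕ, bitDot c (2 * q) = bitDot (c / 2) q := by
      intro q
      rw [bitDot_step]
      simp [Nat.mul_div_cancel_left, Nat.mul_mod_right]
    have ho : ∀ q : ℕ, bitDot c (2 * q + 1) = c % 2 + bitDot (c / 2) q := by
      intro q
      rw [bitDot_step]
      have h1 : (2 * q + 1) % 2 = 1 := by omega
      have hq : (2 * q + 1) / 2 = q := by omega
      rw [h1, hq, mul_one]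
    have hc2 : c / 2 < 2 ^ p := by omega
    have key : ∀ q : ℕ,
        (-1:ℂ) ^ bitDot c (2*q) + (-1:ℂ) ^ bitDot c (2*q+1)
          = (1 + (-1:ℂ) ^ (c % 2)) * (-1:ℂ) ^ bitDot (c / 2) q := by
      intro q
      rw [he, ho, pow_add]
      ring
    rw [Finset.sum_congr rfl (fun q _ => key q), ← Finset.mul_sum, ih _ hc2]
    rcases Nat.mod_two_eq_zero_or_one c with hm | hm
    · have : c = 0 ↔ c / 2 = 0 := by omega
      rw [hm]
      by_cases h0 : c = 0
      · simp [h0, this.mp h0, h2]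
        ring
      · have hcc : ¬ c / 2 = 0 := by omega
        simp [h0, hcc]
    · have h0 : c ≠ 0 := by omega
      simp [hm, h0]

lemma bitDot_parity (a b k : ℕ) :
    (-1:ℂ) ^ (bitDot a k + bitDot b k) = (-1:ℂ) ^ bitDot (a ^^^ b) k := by
  rw [neg_one_pow_mod, neg_one_pow_mod (bitDot (a ^^^ b) k)]
  congr 1
  set n := a + b + (a ^^^ b) + k + 1 with hn
  rw [bitDot_eq_sum a k n (by omega), bitDot_eq_sum b k n (by omega),
    bitDot_eq_sum (a ^^^ b) k n (by omega)]
  rw [← Finset.sum_add_distrib]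
  have term : ∀ t ∈ Finset.range n,
      (a / 2 ^ t % 2 * (k / 2 ^ t % 2) + b / 2 ^ t % 2 * (k / 2 ^ t % 2)) % 2
        = ((a ^^^ b) / 2 ^ t % 2 * (k / 2 ^ t % 2)) % 2 := by
    intro t _
    rw [show a / 2 ^ t % 2 = (a.testBit t).toNat from (Nat.toNat_testBit a t).symm,
      show b / 2 ^ t % 2 = (b.testBit t).toNat from (Nat.toNat_testBit b t).symm,
      show k / 2 ^ t % 2 = (k.testBit t).toNat from (Nat.toNat_testBit k t).symm,
      show (a ^^^ b) / 2 ^ t % 2 = ((a ^^^ b).testBit t).toNat from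
        (Nat.toNat_testBit (a ^^^ b) t).symm,
      Nat.testBit_xor]
    cases a.testBit t <;> cases b.testBit t <;> cases k.testBit t <;> rfl
  calc (∑ t ∈ Finset.range n,
        (a / 2 ^ t % 2 * (k / 2 ^ t % 2) + b / 2 ^ t % 2 * (k / 2 ^ t % 2))) % 2
      = (∑ t ∈ Finset.range n,
        (a / 2 ^ t % 2 * (k / 2 ^ t % 2) + b / 2 ^ t % 2 * (k / 2 ^ t % 2)) % 2) % 2 :=
        Finset.sum_nat_mod _ _ _
    _ = (∑ t ∈ Finset.range n, ((a ^^^ b) / 2 ^ t % 2 * (k / 2 ^ t % 2)) % 2) % 2 := by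
        rw [Finset.sum_congr rfl term]
    _ = (∑ t ∈ Finset.range n, (a ^^^ b) / 2 ^ t % 2 * (k / 2 ^ t % 2)) % 2 :=
        (Finset.sum_nat_mod _ _ _).symm

lemma sum_range_mul' (f : ℕ → ℂ) (a b : ℕ) :
    ∑ n ∈ Finset.range (a * b), f n
      = ∑ q ∈ Finset.range b, ∑ s ∈ Finset.range a, f (a * q + s) := by
  induction b with
  | zero => simp
  | succ b ih => rw [Nat.mul_succ, Finset.sum_range_add, ih, Finset.sum_range_succ]

/-- The OTSM basis vectors
`φ_i[n] = (1/√N) (−1)^{⌊i/M⌋ ⊙ ⌊n/M⌋}` when `n ≡ i (mod M)` (and `0` otherwise),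
with `N = 2^p` a power of two, form an orthonormal basis of `ℂ^{MN}` with respect to
the inner product `⟨u,v⟩ = Σ_n u[n] conj(v[n])`. -/
theorem stmt9 (M : ℕ) (hM : 0 < M) (p : ℕ) (N : ℕ) (hN : N = 2 ^ p)
    (φ : Fin (M * N) → (Fin (M * N) → ℂ))
    (hφ : ∀ (i n : Fin (M * N)),
      φ i n = if (n : ℕ) % M = (i : ℕ) % M then
          ((Real.sqrt N : ℂ))⁻¹ * (-1 : ℂ) ^ bitDot ((i : ℕ) / M) ((n : ℕ) / M)
        else 0) :
    (∀ i j : Fin (M * N),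
      ∑ n : Fin (M * N), φ i n * (starRingEnd ℂ) (φ j n) = if i = j then 1 else 0)
    ∧ Submodule.span ℂ (Set.range φ) = ⊤ := by
  subst hN
  have hNpos : 0 < 2 ^ p := Nat.pow_pos (by norm_num)
  have key : ∀ i j : Fin (M * 2 ^ p),
      ∑ n : Fin (M * 2 ^ p), φ i n * (starRingEnd ℂ) (φ j n)
        = if i = j then 1 else 0 := by
    intro i j
    by_cases hij : (i : ℕ) % M = (j : ℕ) % M
    · -- main case
      set a := (i : ℕ) / M with ha'
      set b := (j : ℕ) / M with hb'
      have ha : a < 2 ^ p := Nat.div_lt_of_lt_mul i.2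
      have hb : b < 2 ^ p := Nat.div_lt_of_lt_mul j.2
      set C : ℂ := ((Real.sqrt ((2 ^ p : ℕ)) : ℂ))⁻¹ * ((Real.sqrt ((2 ^ p : ℕ)) : ℂ))⁻¹
        with hC
      have hCN : C * ((2 ^ p : ℕ) : ℂ) = 1 := by
        have hs : ((Real.sqrt ((2 ^ p : ℕ)) : ℂ)) * ((Real.sqrt ((2 ^ p : ℕ)) : ℂ))
            = ((2 ^ p : ℕ) : ℂ) := by
          rw [← Complex.ofReal_mul, Real.mul_self_sqrt (by positivity)]
          norm_cast
        have hne : ((2 ^ p : ℕ) : ℂ) ≠ 0 := by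
          exact_mod_cast Nat.cast_ne_zero.mpr hNpos.ne'
        have hCeq : C = (((2 ^ p : ℕ) : ℂ))⁻¹ := by rw [hC, ← mul_inv, hs]
        rw [hCeq, inv_mul_cancel₀ hne]
      have h1 : ∀ n : Fin (M * 2 ^ p),
          φ i n * (starRingEnd ℂ) (φ j n)
            = (if (n : ℕ) % M = (i : ℕ) % M then
                C * (-1 : ℂ) ^ (bitDot a ((n : ℕ) / M) + bitDot b ((n : ℕ) / M)) else 0) := by
        intro n
        rw [hφ i n, hφ j n, ← hij]
        by_cases h : (n : ℕ) % M = (i : ℕ) % M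
        · rw [if_pos h, if_pos h, if_pos h, map_mul, map_inv₀, Complex.conj_ofReal,
            map_pow, map_neg, map_one, pow_add, hC]
          ring
        · rw [if_neg h, if_neg h, if_neg h]
          simp
      calc ∑ n : Fin (M * 2 ^ p), φ i n * (starRingEnd ℂ) (φ j n)
          = ∑ n : Fin (M * 2 ^ p),
              (if (n : ℕ) % M = (i : ℕ) % M then
                C * (-1 : ℂ) ^ (bitDot a ((n : ℕ) / M) + bitDot b ((n : ℕ) / M)) else 0) :=
            Finset.sum_congr rfl (fun n _ => h1 n)
        _ = ∑ n ∈ Finset.range (M * 2 ^ p),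
              (if n % M = (i : ℕ) % M then
                C * (-1 : ℂ) ^ (bitDot a (n / M) + bitDot b (n / M)) else 0) :=
            Fin.sum_univ_eq_sum_range (fun n : ℕ => if n % M = (i : ℕ) % M then
              C * (-1 : ℂ) ^ (bitDot a (n / M) + bitDot b (n / M)) else 0) (M * 2 ^ p)
        _ = ∑ q ∈ Finset.range (2 ^ p), ∑ s ∈ Finset.range M,
              (if (M * q + s) % M = (i : ℕ) % M then
                C * (-1 : ℂ) ^ (bitDot a ((M * q + s) / M) + bitDot b ((M * q + s) / M))
               else 0) := sum_range_mul' _ M (2 ^ p)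
        _ = ∑ q ∈ Finset.range (2 ^ p), C * (-1 : ℂ) ^ bitDot (a ^^^ b) q := by
            refine Finset.sum_congr rfl (fun q _ => ?_)
            have hmod : ∀ s, s < M → (M * q + s) % M = s := fun s hs => by
              rw [Nat.mul_add_mod, Nat.mod_eq_of_lt hs]
            have hdiv : ∀ s, s < M → (M * q + s) / M = q := fun s hs => by
              rw [Nat.mul_add_div hM, Nat.div_eq_of_lt hs, add_zero]
            have hterm : ∀ s ∈ Finset.range M,
                (if (M * q + s) % M = (i : ℕ) % M then
                  C * (-1 : ℂ) ^ (bitDot a ((M * q + s) / M) + bitDot b ((M * q + s) / M))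
                 else 0)
                = (if s = (i : ℕ) % M then
                    C * (-1 : ℂ) ^ (bitDot a q + bitDot b q) else 0) := by
              intro s hs
              rw [Finset.mem_range] at hs
              rw [hmod s hs, hdiv s hs]
            rw [Finset.sum_congr rfl hterm, Finset.sum_ite_eq' (Finset.range M),
              if_pos (Finset.mem_range.mpr (Nat.mod_lt _ hM)), bitDot_parity]
        _ = C * (if a ^^^ b = 0 then ((2 ^ p : ℕ) : ℂ) else 0) := by
            rw [← Finset.mul_sum, walsh_sum p (a ^^^ b) (Nat.xor_lt_two_pow ha hb)]
        _ = if i = j then 1 else 0 := by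
            have hab : a ^^^ b = 0 ↔ a = b := by
              constructor
              · intro h
                have := congrArg (· ^^^ b) h
                simpa [Nat.xor_assoc] using this
              · intro h; rw [h]; exact Nat.xor_self b
            have hijiff : i = j ↔ a = b := by
              constructor
              · intro h; rw [ha', hb', h]
              · intro h
                have hx : (i : ℕ) / M = (j : ℕ) / M := h
                have h1 := Nat.div_add_mod (i : ℕ) M
                have h2 := Nat.div_add_mod (j : ℕ) M
                apply Fin.ext
                rw [← h1, ← h2, hx, hij]
            by_cases h : a = b
            · rw [if_pos (hab.mpr h), if_pos (hijiff.mpr h), hCN]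
            · rw [if_neg (fun hh => h (hab.mp hh)), if_neg (fun hh => h (hijiff.mp hh)),
                mul_zero]
    · -- different residues
      have hne : i ≠ j := fun h => hij (by rw [h])
      rw [if_neg hne]
      apply Finset.sum_eq_zero
      intro n _
      rw [hφ i n, hφ j n]
      by_cases h1 : (n : ℕ) % M = (i : ℕ) % M
      · rw [if_pos h1, if_neg (fun h2 => hij (h1.symm.trans h2)), map_zero, mul_zero]
      · rw [if_neg h1, zero_mul]
  refine ⟨key, ?_⟩
  haveI : Nonempty (Fin (M * 2 ^ p)) := ⟨⟨0, by positivity⟩⟩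
  have hli : LinearIndependent ℂ φ := by
    rw [Fintype.linearIndependent_iff]
    intro g hg j
    have h0 : ∑ n : Fin (M * 2 ^ p),
        (∑ i : Fin (M * 2 ^ p), g i • φ i) n * (starRingEnd ℂ) (φ j n) = 0 := by
      rw [hg]
      simp
    calc g j = ∑ i : Fin (M * 2 ^ p), g i * (if i = j then 1 else 0) := by
          simp [Finset.sum_ite_eq']
      _ = ∑ i : Fin (M * 2 ^ p), g i *
            ∑ n : Fin (M * 2 ^ p), φ i n * (starRingEnd ℂ) (φ j n) := by
          refine Finset.sum_congr rfl (fun i _ => ?_)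
          rw [key i j]
      _ = ∑ i : Fin (M * 2 ^ p), ∑ n : Fin (M * 2 ^ p),
            g i * (φ i n * (starRingEnd ℂ) (φ j n)) := by
          simp [Finset.mul_sum]
      _ = ∑ n : Fin (M * 2 ^ p), ∑ i : Fin (M * 2 ^ p),
            g i * (φ i n * (starRingEnd ℂ) (φ j n)) := Finset.sum_comm
      _ = ∑ n : Fin (M * 2 ^ p),
            (∑ i : Fin (M * 2 ^ p), g i • φ i) n * (starRingEnd ℂ) (φ j n) := by
          refine Finset.sum_congr rfl (fun n _ => ?_)
          rw [Finset.sum_apply]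
          rw [Finset.sum_mul]
          refine Finset.sum_congr rfl (fun i _ => ?_)
          simp [mul_assoc]
      _ = 0 := h0
  have hcard : Fintype.card (Fin (M * 2 ^ p)) = Module.finrank ℂ (Fin (M * 2 ^ p) → ℂ) := by
    simp [Module.finrank_fin_fun]
  exact hli.span_eq_top_of_card_eq_finrank hcard
end
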